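/- arXiv:2212.04470 — 4 statements merged into one kernel-verified Lean document; each statement's English description precedes it below -/
import Mathlib

section
/- Let N ≥ 1, let C ∈ ℝ^{N×N} be symmetric positive definite, let f(x) = (2π)^{-N/2} (det C)^{-1/2} exp(−(1/2) xᵀ C⁻¹ x) be the centered Gaussian density with covariance C, and let r ∈ {−1, +1}^N. Define the orthant O(r) = {x ∈ ℝ^N : r_n x_n > 0 for all n}. For each n, let K^{(n)} ∈ ℝ^{(N−1)×(N−1)} be the matrix obtained from C⁻¹ by deleting its n-th row and column, let g_n(x) = (2π)^{-(N−1)/2} (det K^{(n)})^{1/2} exp(−(1/2) xᵀ K^{(n)} x) be the Gaussian density on ℝ^{N−1} with precision matrix K^{(n)}, and let O_n(r) ⊂ ℝ^{N−1} be the orthant determined by the vector r with its n-th entry deleted. Then for every index i, ∫_{O(r)} x_i f(x) dx = Σ_{n=1}^{N} r_n · C_{i,n} · (2π C_{n,n})^{−1/2} · ∫_{O_n(r)} g_n(x) dx. -/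
/-!
Write `A = C⁻¹` and `φ x = exp (-½ xᵀ A x)`. Since `x = C (A x)`, the mean-integral of `x_i` over
the orthant splits as `∑ₙ C_in ∫ (A x)_n φ x`. Now `(A x)_n φ = -∂φ/∂x_n`, so integrating first
in `x_n` over the half-line `{r_n x_n > 0}` (Fubini) leaves `r_n` times the value of `φ` at
`x_n = 0`, which is the unnormalized Gaussian on `ℝ^(N-1)` whose precision matrix is the principal
submatrix `K⁽ⁿ⁾` of `A`. The normalizing constants match because `det K⁽ⁿ⁾ = C_nn / det C`, the
`(n, n)` entry of the adjugate of `A`.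
-/

open MeasureTheory Matrix Real Set Filter

lemma Matrix.PosDef.exists_pos_mul_sq_norm_le {ι : Type*} [Fintype ι] {A : Matrix ι ι ℝ}
    (hA : A.PosDef) : ∃ ε > 0, ∀ x : ι → ℝ, ε * ‖x‖ ^ 2 ≤ x ⬝ᵥ A *ᵥ x := by
  cases isEmpty_or_nonempty ι
  · exact ⟨1, one_pos, fun x => by simp [Subsingleton.elim x 0]⟩
  obtain ⟨u, hu, hmin⟩ := (isCompact_sphere (0 : ι → ℝ) 1).exists_isMinOn
    (NormedSpace.sphere_nonempty.2 zero_le_one)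
    (by fun_prop : Continuous fun x => x ⬝ᵥ A *ᵥ x).continuousOn
  refine ⟨u ⬝ᵥ A *ᵥ u,
    by simpa using hA.dotProduct_mulVec_pos (ne_zero_of_mem_sphere one_ne_zero ⟨u, hu⟩),
    fun x => ?_⟩
  rcases eq_or_ne x 0 with rfl | hx
  · simp
  have hx' : ‖x‖⁻¹ • x ∈ Metric.sphere (0 : ι → ℝ) 1 := by simp [norm_smul, hx]
  calc u ⬝ᵥ A *ᵥ u * ‖x‖ ^ 2 ≤ (‖x‖⁻¹ • x) ⬝ᵥ A *ᵥ (‖x‖⁻¹ • x) * ‖x‖ ^ 2 := by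
        gcongr; exact hmin hx'
    _ = x ⬝ᵥ A *ᵥ x := by
        rw [mulVec_smul, dotProduct_smul, smul_dotProduct, smul_eq_mul, smul_eq_mul]
        field_simp

lemma integrable_norm_pow_mul_exp_neg_mul_sq_norm {E : Type*} [NormedAddCommGroup E]
    [NormedSpace ℝ E] [FiniteDimensional ℝ E] [MeasurableSpace E] [BorelSpace E] [Nontrivial E]
    (μ : Measure E) [μ.IsAddHaarMeasure] {b : ℝ} (hb : 0 < b) (k : ℕ) :
    Integrable (fun x => ‖x‖ ^ k * exp (-b * ‖x‖ ^ 2)) μ := by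
  refine (integrable_fun_norm_addHaar μ (f := fun y => y ^ k * exp (-b * y ^ 2))).2 ?_
  refine (integrableOn_rpow_mul_exp_neg_mul_sq hb (s := (Module.finrank ℝ E - 1 + k : ℕ))
    (neg_one_lt_zero.trans_le (Nat.cast_nonneg _))).congr_fun (fun y _ => ?_) measurableSet_Ioi
  simp only [rpow_natCast, pow_add, smul_eq_mul]
  ring

lemma Matrix.PosDef.integrable_apply_mul_exp_neg_quadForm {ι : Type*} [Fintype ι]
    {A : Matrix ι ι ℝ} (hA : A.PosDef) (k : ι) :
    Integrable (fun x : ι → ℝ => x k * exp (-(1 / 2) * (x ⬝ᵥ A *ᵥ x))) := by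
  have : Nonempty ι := ⟨k⟩
  obtain ⟨ε, hε, hQ⟩ := hA.exists_pos_mul_sq_norm_le
  refine (integrable_norm_pow_mul_exp_neg_mul_sq_norm volume (half_pos hε) 1).mono'
    (by fun_prop) (ae_of_all _ fun x => ?_)
  rw [norm_mul, Real.norm_of_nonneg (exp_pos _).le, pow_one]
  gcongr ?_ * exp ?_
  · exact norm_le_pi_norm x k
  · linarith [hQ x]

lemma Matrix.PosDef.integrable_mulVec_apply_mul_exp_neg_quadForm {ι : Type*} [Fintype ι]
    {A : Matrix ι ι ℝ} (hA : A.PosDef) (n : ι) :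
    Integrable (fun x : ι → ℝ => (A *ᵥ x) n * exp (-(1 / 2) * (x ⬝ᵥ A *ᵥ x))) := by
  simp only [mulVec, dotProduct, Finset.sum_mul, mul_assoc]
  exact integrable_finsetSum _ fun k _ => (hA.integrable_apply_mul_exp_neg_quadForm k).const_mul _

lemma integral_setOf_mul_pos_of_hasDerivAt {f f' : ℝ → ℝ}
    (hderiv : ∀ t, HasDerivAt f (f' t) t) (hf' : Integrable f') (hf : Integrable f) {ρ : ℝ}
    (hρ : ρ = 1 ∨ ρ = -1) :
    ∫ t in {t | ρ * t > 0}, f' t = -(ρ * f 0) := by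
  rcases hρ with rfl | rfl
  · have htop := tendsto_zero_of_hasDerivAt_of_integrableOn_Ioi (a := 0) (fun t _ => hderiv t)
      hf'.integrableOn hf.integrableOn
    simpa [← Ioi_def] using
      integral_Ioi_of_hasDerivAt_of_tendsto' (fun t _ => hderiv t) hf'.integrableOn htop
  · have hbot := tendsto_zero_of_hasDerivAt_of_integrableOn_Iic (a := 0) (fun t _ => hderiv t)
      hf'.integrableOn hf.integrableOn
    have hset : {t : ℝ | -1 * t > 0} = Iio 0 := by ext t; simp
    rw [hset, ← integral_Iic_eq_integral_Iio,
      integral_Iic_of_hasDerivAt_of_tendsto' (fun t _ => hderiv t) hf'.integrableOn hbot]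
    ring

section Quadratic

variable {α β γ : ℝ}

lemma neg_half_quadratic_eq (hα : α ≠ 0) (t : ℝ) :
    -(1 / 2) * (α * t ^ 2 + 2 * β * t + γ) =
      -(α / 2) * (t + β / α) ^ 2 - (γ - β ^ 2 / α) / 2 := by
  field_simp
  ring

lemma hasDerivAt_exp_neg_half_quadratic (t : ℝ) :
    HasDerivAt (fun s => exp (-(1 / 2) * (α * s ^ 2 + 2 * β * s + γ)))
      (-((α * t + β) * exp (-(1 / 2) * (α * t ^ 2 + 2 * β * t + γ)))) t := by
  have := ((((hasDerivAt_pow 2 t).const_mul α).add ((hasDerivAt_id t).const_mul (2 * β))).add_const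
    γ).const_mul (-(1 / 2) : ℝ)
  refine this.exp.congr_deriv ?_
  simp only [id, Pi.add_apply]
  ring

lemma integrable_exp_neg_half_quadratic (hα : 0 < α) :
    Integrable fun t => exp (-(1 / 2) * (α * t ^ 2 + 2 * β * t + γ)) := by
  simp_rw [neg_half_quadratic_eq hα.ne', sub_eq_add_neg _ ((γ - _) / 2), exp_add]
  exact ((integrable_exp_neg_mul_sq (half_pos hα)).comp_add_right _).mul_const _

lemma integrable_mul_exp_neg_half_quadratic (hα : 0 < α) :
    Integrable fun t => (α * t + β) * exp (-(1 / 2) * (α * t ^ 2 + 2 * β * t + γ)) := by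
  have h := (((integrable_mul_exp_neg_mul_sq (half_pos hα)).comp_add_right (β / α)).const_mul
    α).mul_const (exp (-((γ - β ^ 2 / α) / 2)))
  refine h.congr (ae_of_all _ fun t => ?_)
  simp only [neg_half_quadratic_eq hα.ne', sub_eq_add_neg _ ((γ - _) / 2), exp_add]
  field_simp

lemma integral_setOf_mul_pos_mul_exp_neg_half_quadratic (hα : 0 < α) {ρ : ℝ}
    (hρ : ρ = 1 ∨ ρ = -1) :
    ∫ t in {t | ρ * t > 0}, (α * t + β) * exp (-(1 / 2) * (α * t ^ 2 + 2 * β * t + γ)) =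
      ρ * exp (-(1 / 2) * γ) := by
  have h := integral_setOf_mul_pos_of_hasDerivAt
    (hasDerivAt_exp_neg_half_quadratic (β := β) (γ := γ))
    (integrable_mul_exp_neg_half_quadratic hα).fun_neg (integrable_exp_neg_half_quadratic hα) hρ
  simpa [integral_neg] using h

end Quadratic

namespace Matrix

variable {N : ℕ} (A : Matrix (Fin (N + 1)) (Fin (N + 1)) ℝ) (n : Fin (N + 1)) (t : ℝ)
  (y : Fin N → ℝ)

lemma mulVec_insertNth_apply_self :
    (A *ᵥ n.insertNth t y) n = A n n * t + ∑ m, A n (n.succAbove m) * y m := by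
  simp [mulVec, dotProduct, Fin.sum_univ_succAbove _ n]

lemma mulVec_insertNth_apply_succAbove (m : Fin N) :
    (A *ᵥ n.insertNth t y) (n.succAbove m) =
      A (n.succAbove m) n * t + (A.submatrix n.succAbove n.succAbove *ᵥ y) m := by
  simp [mulVec, dotProduct, Fin.sum_univ_succAbove _ n]

lemma IsSymm.insertNth_dotProduct_mulVec_insertNth {A : Matrix (Fin (N + 1)) (Fin (N + 1)) ℝ}
    (hA : A.IsSymm) :
    n.insertNth t y ⬝ᵥ A *ᵥ n.insertNth t y =
      A n n * t ^ 2 + 2 * (∑ m, A n (n.succAbove m) * y m) * t +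
        y ⬝ᵥ A.submatrix n.succAbove n.succAbove *ᵥ y := by
  rw [dotProduct, Fin.sum_univ_succAbove _ n]
  simp only [Fin.insertNth_apply_same, Fin.insertNth_apply_succAbove,
    mulVec_insertNth_apply_self, mulVec_insertNth_apply_succAbove, mul_add, Finset.sum_add_distrib,
    hA.apply]
  have hcross : ∑ m, y m * (A n (n.succAbove m) * t) = t * ∑ m, A n (n.succAbove m) * y m := by
    rw [Finset.mul_sum]
    exact Finset.sum_congr rfl fun m _ => by ring
  rw [hcross, dotProduct]
  ring

end Matrix

def orthant {ι : Type*} (r : ι → ℝ) : Set (ι → ℝ) := {x | ∀ n, r n * x n > 0}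

lemma insertNth_preimage_orthant {N : ℕ} (r : Fin (N + 1) → ℝ) (n : Fin (N + 1)) :
    (fun p : ℝ × (Fin N → ℝ) => n.insertNth p.1 p.2) ⁻¹' orthant r =
      {t | r n * t > 0} ×ˢ orthant (r ∘ n.succAbove) := by
  ext ⟨t, y⟩
  simp [orthant, Fin.forall_iff_succAbove n]

lemma Matrix.PosDef.integral_orthant_mulVec_apply_mul_exp_neg_quadForm {N : ℕ}
    {A : Matrix (Fin (N + 1)) (Fin (N + 1)) ℝ} (hA : A.PosDef) {r : Fin (N + 1) → ℝ}
    {n : Fin (N + 1)} (hrn : r n = 1 ∨ r n = -1) :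
    ∫ x in orthant r, (A *ᵥ x) n * exp (-(1 / 2) * (x ⬝ᵥ A *ᵥ x)) =
      r n * ∫ y in orthant (r ∘ n.succAbove),
        exp (-(1 / 2) * (y ⬝ᵥ A.submatrix n.succAbove n.succAbove *ᵥ y)) := by
  set G := fun x : Fin (N + 1) → ℝ => (A *ᵥ x) n * exp (-(1 / 2) * (x ⬝ᵥ A *ᵥ x))
  set e := (MeasurableEquiv.piFinSuccAbove (fun _ : Fin (N + 1) => ℝ) n).symm
  have he : MeasurePreserving e := (volume_preserving_piFinSuccAbove (fun _ => ℝ) n).symm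
  have hpre : e ⁻¹' orthant r = {t | r n * t > 0} ×ˢ orthant (r ∘ n.succAbove) :=
    insertNth_preimage_orthant r n
  have hint : Integrable (G ∘ e)
      ((volume.restrict {t | r n * t > 0}).prod (volume.restrict (orthant (r ∘ n.succAbove)))) := by
    rw [Measure.prod_restrict, ← Measure.volume_eq_prod]
    exact ((he.integrable_comp_emb e.measurableEmbedding).2
      (hA.integrable_mulVec_apply_mul_exp_neg_quadForm n)).restrict
  have hsymm : A.IsSymm := isHermitian_iff_isSymm.1 hA.isHermitian
  calc ∫ x in orthant r, G x
      = ∫ p in {t | r n * t > 0} ×ˢ orthant (r ∘ n.succAbove), G (e p) := by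
        rw [← hpre, he.setIntegral_preimage_emb e.measurableEmbedding]
    _ = ∫ y in orthant (r ∘ n.succAbove), ∫ t in {t | r n * t > 0}, G (n.insertNth t y) := by
        rw [Measure.volume_eq_prod, ← Measure.prod_restrict]
        exact integral_prod_symm _ hint
    _ = ∫ y in orthant (r ∘ n.succAbove),
          r n * exp (-(1 / 2) * (y ⬝ᵥ A.submatrix n.succAbove n.succAbove *ᵥ y)) := by
        congr 1 with y
        simp only [G, mulVec_insertNth_apply_self, hsymm.insertNth_dotProduct_mulVec_insertNth]
        exact integral_setOf_mul_pos_mul_exp_neg_half_quadratic hA.diag_pos hrn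
    _ = _ := integral_const_mul _ _

lemma integral_apply_mul_eq_sum_mul_integral_inv_mulVec {ι : Type*} [Fintype ι] [DecidableEq ι]
    {C : Matrix ι ι ℝ} (hC : IsUnit C.det) {μ : Measure (ι → ℝ)} {φ : (ι → ℝ) → ℝ}
    (hint : ∀ n, Integrable (fun x => (C⁻¹ *ᵥ x) n * φ x) μ) (i : ι) :
    ∫ x, x i * φ x ∂μ = ∑ n, C i n * ∫ x, (C⁻¹ *ᵥ x) n * φ x ∂μ := by
  have hx (x : ι → ℝ) : x i = ∑ n, C i n * (C⁻¹ *ᵥ x) n := by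
    conv_lhs => rw [← one_mulVec x, ← mul_nonsing_inv C hC, ← mulVec_mulVec]
    rfl
  simp_rw [hx, Finset.sum_mul, mul_assoc]
  rw [integral_finsetSum _ fun n _ => (hint n).const_mul _]
  simp_rw [integral_const_mul]

lemma Matrix.det_submatrix_succAbove_inv {K : Type*} [Field K] {N : ℕ}
    (C : Matrix (Fin (N + 1)) (Fin (N + 1)) K) (hC : C.det ≠ 0) (n : Fin (N + 1)) :
    (C⁻¹.submatrix n.succAbove n.succAbove).det = C n n / C.det := by
  have hadj : C⁻¹.adjugate = C.det⁻¹ • C := by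
    have := congrArg (C * ·) (mul_adjugate C⁻¹)
    simpa [← Matrix.mul_assoc, mul_nonsing_inv _ hC.isUnit, det_nonsing_inv] using this
  have := adjugate_fin_succ_eq_det_submatrix C⁻¹ n n
  rw [hadj, ← two_mul, pow_mul, neg_one_sq, one_pow, one_mul] at this
  rw [← this, smul_apply, smul_eq_mul, div_eq_inv_mul]

lemma two_pi_rpow_neg_half_succ_mul_rpow_neg_half (N : ℕ) {c d : ℝ} (hc : 0 < c) (hd : 0 < d) :
    (2 * π) ^ (-((N + 1 : ℕ) : ℝ) / 2) * d ^ (-(1 : ℝ) / 2) =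
      (2 * π * c) ^ (-(1 : ℝ) / 2) * ((2 * π) ^ (-(N : ℝ) / 2) * (c / d) ^ ((1 : ℝ) / 2)) := by
  have h2π : 0 < 2 * π := by positivity
  have hsplit : (2 * π) ^ (-((N + 1 : ℕ) : ℝ) / 2) =
      (2 * π) ^ (-(1 : ℝ) / 2) * (2 * π) ^ (-(N : ℝ) / 2) := by
    rw [← rpow_add h2π]
    push_cast
    ring_nf
  rw [mul_rpow h2π.le hc.le, div_rpow hc.le hd.le, hsplit, neg_div, rpow_neg hd.le]
  field_simp
  rw [← rpow_add hc]
  norm_num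

theorem stmt0_general (N' : ℕ) (C : Matrix (Fin (N' + 1)) (Fin (N' + 1)) ℝ)
    (hC : C.PosDef)
    (r : Fin (N' + 1) → ℝ) (hr : ∀ n, r n = 1 ∨ r n = -1)
    (f : (Fin (N' + 1) → ℝ) → ℝ)
    (hf : ∀ x, f x = (2 * π) ^ (-((N' + 1 : ℕ) : ℝ) / 2) * C.det ^ (-(1 : ℝ) / 2) *
      Real.exp (-(1 / 2) * (x ⬝ᵥ (C⁻¹ *ᵥ x))))
    (g : Fin (N' + 1) → (Fin N' → ℝ) → ℝ)
    (hg : ∀ n x, g n x = (2 * π) ^ (-((N' : ℕ) : ℝ) / 2) *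
      ((C⁻¹).submatrix n.succAbove n.succAbove).det ^ ((1 : ℝ) / 2) *
      Real.exp (-(1 / 2) * (x ⬝ᵥ ((C⁻¹).submatrix n.succAbove n.succAbove *ᵥ x))))
    (i : Fin (N' + 1)) :
    ∫ x in {x : Fin (N' + 1) → ℝ | ∀ n, r n * x n > 0}, x i * f x =
      ∑ n : Fin (N' + 1), r n * C i n * (2 * π * C n n) ^ (-(1 : ℝ) / 2) *
        ∫ x in {x : Fin N' → ℝ | ∀ m, r (n.succAbove m) * x m > 0}, g n x := by
  change ∫ x in orthant r, x i * f x = ∑ n, r n * C i n * (2 * π * C n n) ^ (-(1 : ℝ) / 2) *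
    ∫ y in orthant (r ∘ n.succAbove), g n y
  have hdet : 0 < C.det := hC.det_pos
  have hxf (x : Fin (N' + 1) → ℝ) : x i * f x = (2 * π) ^ (-((N' + 1 : ℕ) : ℝ) / 2) *
      C.det ^ (-(1 : ℝ) / 2) * (x i * exp (-(1 / 2) * (x ⬝ᵥ C⁻¹ *ᵥ x))) := by
    rw [hf]
    ring
  simp_rw [hxf, hg, integral_const_mul]
  rw [integral_apply_mul_eq_sum_mul_integral_inv_mulVec hdet.ne'.isUnit
    (fun n => (hC.inv.integrable_mulVec_apply_mul_exp_neg_quadForm n).restrict) i, Finset.mul_sum]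
  refine Finset.sum_congr rfl fun n _ => ?_
  rw [hC.inv.integral_orthant_mulVec_apply_mul_exp_neg_quadForm (hr n),
    det_submatrix_succAbove_inv C hdet.ne',
    two_pi_rpow_neg_half_succ_mul_rpow_neg_half N' hC.diag_pos hdet]
  ring

/-- Element-wise mean-integral of a centered multivariate Gaussian over an
orthant, expressed via `(N-1)`-dimensional Gaussian orthant integrals (Theorem 1). -/
theorem stmt0 (N' : ℕ) (C : Matrix (Fin (N' + 1)) (Fin (N' + 1)) ℝ)
    (hC : C.PosDef) (hCsymm : C.IsSymm)
    (r : Fin (N' + 1) → ℝ) (hr : ∀ n, r n = 1 ∨ r n = -1)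
    (f : (Fin (N' + 1) → ℝ) → ℝ)
    (hf : ∀ x, f x = (2 * π) ^ (-((N' + 1 : ℕ) : ℝ) / 2) * C.det ^ (-(1 : ℝ) / 2) *
      Real.exp (-(1 / 2) * (x ⬝ᵥ (C⁻¹ *ᵥ x))))
    (g : Fin (N' + 1) → (Fin N' → ℝ) → ℝ)
    (hg : ∀ n x, g n x = (2 * π) ^ (-((N' : ℕ) : ℝ) / 2) *
      ((C⁻¹).submatrix n.succAbove n.succAbove).det ^ ((1 : ℝ) / 2) *
      Real.exp (-(1 / 2) * (x ⬝ᵥ ((C⁻¹).submatrix n.succAbove n.succAbove *ᵥ x))))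
    (i : Fin (N' + 1)) :
    ∫ x in {x : Fin (N' + 1) → ℝ | ∀ n, r n * x n > 0}, x i * f x =
      ∑ n : Fin (N' + 1), r n * C i n * (2 * π * C n n) ^ (-(1 : ℝ) / 2) *
        ∫ x in {x : Fin N' → ℝ | ∀ m, r (n.succAbove m) * x m > 0}, g n x :=
  stmt0_general N' C hC r hr f hf g hg i
end

section
/- Let M ≥ 1 be an integer. Let C_r ∈ ℂ^{M×M} be the matrix with entries [C_r]_{m,n} = 1 − |m−n|/M + i·(m−n)/M for 1 ≤ m, n ≤ M, and let D ∈ ℂ^{M×M} be the matrix whose (m,n) entry is the sum of the following contributions: M if m = n; −M/2 if |m−n| = 1; and i·M·(n−m)/(2(M−1)) if |m−n| = M−1 (for M = 2 the last two conditions coincide and both contributions are added; for M = 1 only the diagonal term occurs). Then D · C_r = I_M and C_r · D = I_M; in particular C_r is invertible with C_r⁻¹ = D. -/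
/-!
Write `g(d) = 1 - |d|/M + i d/M`, so that `[C_r]_{m,n} = g(m - n)`. Two facts about `g` give the
inverse. First, the second difference `g(d+1) - 2 g(d) + g(d-1)` vanishes except at `d = 0`, where
it is `-2/M`. Second, `g(d) = i g(d - M)` for `0 ≤ d ≤ M`, so the columns of `C_r` extend to
sequences with `x(n + M) = i x(n)` across both ends of the index range. On such sequences the cyclic
shift `P` with wrap-around weight `i` (and its adjoint) act as the forward (and backward) shift, and
`D = M (1 - (P + Pᴴ)/2)`. Hence `D C_r = I`, and `C_r D = I` follows in finite dimension.
-/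

open Matrix Complex

noncomputable def covKernel (M : ℕ) (d : ℤ) : ℂ :=
  ((1 - |(d : ℝ)| / M : ℝ) : ℂ) + I * ((d / M : ℝ) : ℂ)

noncomputable def cov (M : ℕ) : Matrix (Fin M) (Fin M) ℂ :=
  of fun m n => covKernel M ((m : ℕ) - (n : ℕ))

theorem Int.abs_add_one_add_abs_sub_one (d : ℤ) :
    |d + 1| + |d - 1| = 2 * |d| + if d = 0 then 2 else 0 := by
  rcases lt_trichotomy d 0 with h | rfl | h
  · rw [if_neg h.ne, abs_of_neg h, abs_of_nonpos (by omega), abs_of_neg (by omega)]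
    ring
  · norm_num
  · rw [if_neg h.ne', abs_of_pos h, abs_of_pos (by omega), abs_of_nonneg (by omega)]
    ring

theorem covKernel_add_one_add_covKernel_sub_one {M : ℕ} (hM : M ≠ 0) (d : ℤ) :
    covKernel M (d + 1) + covKernel M (d - 1) =
      2 * covKernel M d - if d = 0 then 2 / (M : ℂ) else 0 := by
  have h : (|(d : ℝ) + 1| + |(d : ℝ) - 1| : ℝ) = (2 * |(d : ℝ)| + if d = 0 then 2 else 0 : ℝ) := by
    exact_mod_cast Int.abs_add_one_add_abs_sub_one d
  have hM' : (M : ℂ) ≠ 0 := Nat.cast_ne_zero.2 hM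
  have h' := congrArg ((↑) : ℝ → ℂ) h
  unfold covKernel
  split_ifs at h' ⊢ <;> push_cast at h' ⊢ <;> field_simp <;> linear_combination -h'

theorem covKernel_eq_I_mul_covKernel_sub {M : ℕ} (hM : M ≠ 0) {d : ℤ} (h₀ : 0 ≤ d) (h₁ : d ≤ M) :
    covKernel M d = I * covKernel M (d - M) := by
  have hd : |(d : ℝ)| = d := abs_of_nonneg (by exact_mod_cast h₀)
  have hdM : |(d : ℝ) - M| = M - d := by
    rw [abs_sub_comm]
    exact abs_of_nonneg (by exact_mod_cast sub_nonneg.2 h₁)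
  have hM' : (M : ℝ) ≠ 0 := Nat.cast_ne_zero.2 hM
  apply Complex.ext <;> simp [covKernel, hd, hdM] <;> field_simp <;> ring

noncomputable def twistedShift (M : ℕ) : Matrix (Fin M) (Fin M) ℂ :=
  of fun m n => if (n : ℕ) = m + 1 then 1 else if (m : ℕ) + 1 = M ∧ (n : ℕ) = 0 then I else 0

theorem twistedShift_mulVec_apply {M : ℕ} {c : ℤ → ℂ} (hc : c M = I * c 0) (m : Fin M) :
    (twistedShift M *ᵥ fun n => c (n : ℕ)) m = c ((m : ℕ) + 1) := by
  simp only [mulVec, dotProduct, twistedShift, of_apply]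
  by_cases hm : (m : ℕ) + 1 < M
  · rw [Finset.sum_eq_single ⟨m + 1, hm⟩]
    · simp
    · intro n _ hn
      rw [if_neg (fun h => hn (Fin.ext h)), if_neg (by omega), zero_mul]
    · simp
  · rw [Finset.sum_eq_single ⟨0, m.pos⟩]
    · simp [show (m : ℕ) + 1 = M by omega, show ((m : ℕ) : ℤ) + 1 = M by omega, m.pos.ne, hc]
    · intro n _ hn
      rw [if_neg (by omega), if_neg (fun h => hn (Fin.ext h.2)), zero_mul]
    · simp

theorem conjTranspose_twistedShift_mulVec_apply {M : ℕ} {c : ℤ → ℂ} (hc : c (M - 1) = I * c (-1))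
    (m : Fin M) : ((twistedShift M)ᴴ *ᵥ fun n => c (n : ℕ)) m = c ((m : ℕ) - 1) := by
  simp only [mulVec, dotProduct, conjTranspose_apply, twistedShift, of_apply]
  by_cases hm : (m : ℕ) = 0
  · rw [Finset.sum_eq_single ⟨M - 1, by omega⟩]
    · simp [hm, show M - 1 + 1 = M by omega, show ((M - 1 : ℕ) : ℤ) = M - 1 by omega, m.pos.ne, hc]
      rw [← mul_assoc, I_mul_I]
      ring
    · intro n _ hn
      rw [if_neg (by omega), if_neg (fun h => hn (Fin.ext (by simp; omega))), star_zero, zero_mul]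
    · simp
  · rw [Finset.sum_eq_single ⟨m - 1, by omega⟩]
    · simp [show (m : ℕ) - 1 + 1 = m by omega, show (((m : ℕ) - 1 : ℕ) : ℤ) = (m : ℕ) - 1 by omega]
    · intro n _ hn
      rw [if_neg (fun h => hn (Fin.ext (by simp; omega))), if_neg (by omega), star_zero, zero_mul]
    · simp

noncomputable def covInv (M : ℕ) : Matrix (Fin M) (Fin M) ℂ :=
  (M : ℂ) • (1 - (2 : ℂ)⁻¹ • (twistedShift M + (twistedShift M)ᴴ))

theorem covInv_apply {M : ℕ} (m n : Fin M) : covInv M m n =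
      (if m = n then (M : ℂ) else 0)
      + (if |((m : ℕ) : ℤ) - ((n : ℕ) : ℤ)| = 1 then -(M : ℂ) / 2 else 0)
      + (if |((m : ℕ) : ℤ) - ((n : ℕ) : ℤ)| = (M : ℤ) - 1 ∧ m ≠ n then
          I * (M : ℂ) * ((((n : ℕ) : ℝ) - ((m : ℕ) : ℝ) : ℝ) : ℂ) / (2 * ((M : ℂ) - 1))
        else 0) := by
  obtain ⟨a, ha⟩ := m
  obtain ⟨b, hb⟩ := n
  have hM : (0 : ℤ) ≤ M - 1 := by omega
  simp only [covInv, twistedShift, Matrix.smul_apply, Matrix.sub_apply, Matrix.add_apply, one_apply,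
    conjTranspose_apply, of_apply, Fin.mk.injEq, Ne, smul_eq_mul, abs_eq hM, abs_eq zero_le_one]
  split_ifs <;> simp only [star_one, star_zero, Complex.star_def, Complex.conj_I] <;> first
    | omega
    | ring1
    -- the corner entries `(0, M - 1)` and `(M - 1, 0)`, where `M ≥ 2`
    | have hM₁ : (M : ℂ) - 1 ≠ 0 := sub_ne_zero.2 (by exact_mod_cast (by omega : M ≠ 1))
      obtain ⟨rfl, rfl⟩ | ⟨rfl, rfl⟩ : a = 0 ∧ b + 1 = M ∨ a + 1 = M ∧ b = 0 := by omega
      all_goals first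
        | omega
        | push_cast at hM₁ ⊢
          field_simp
          ring1

theorem covInv_mulVec_apply {M : ℕ} {c : ℤ → ℂ} (hc₀ : c M = I * c 0)
    (hc₁ : c (M - 1) = I * c (-1)) (m : Fin M) :
    (covInv M *ᵥ fun n => c (n : ℕ)) m = M * (c m - (c ((m : ℕ) + 1) + c ((m : ℕ) - 1)) / 2) := by
  simp only [covInv, smul_mulVec, sub_mulVec, one_mulVec, add_mulVec,
    Pi.smul_apply, Pi.sub_apply, Pi.add_apply, smul_eq_mul, twistedShift_mulVec_apply hc₀,
    conjTranspose_twistedShift_mulVec_apply hc₁]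
  ring

theorem covInv_mul_cov (M : ℕ) : covInv M * cov M = 1 := by
  ext m k
  have hM : M ≠ 0 := m.pos.ne'
  have hc₀ : covKernel M (M - (k : ℕ)) = I * covKernel M (0 - (k : ℕ)) := by
    convert covKernel_eq_I_mul_covKernel_sub hM (d := M - (k : ℕ)) (by omega) (by omega) using 3
    ring
  have hc₁ : covKernel M (M - 1 - (k : ℕ)) = I * covKernel M (-1 - (k : ℕ)) := by
    convert covKernel_eq_I_mul_covKernel_sub hM (d := M - 1 - (k : ℕ)) (by omega) (by omega) using 3
    ring
  have hcm := covKernel_add_one_add_covKernel_sub_one hM ((m : ℕ) - (k : ℕ))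
  calc (covInv M * cov M) m k = (covInv M *ᵥ fun n => covKernel M ((n : ℕ) - (k : ℕ))) m := rfl
    _ = M * (covKernel M ((m : ℕ) - (k : ℕ)) - (covKernel M ((m : ℕ) + 1 - (k : ℕ)) +
          covKernel M ((m : ℕ) - 1 - (k : ℕ))) / 2) :=
          covInv_mulVec_apply (c := fun x => covKernel M (x - (k : ℕ))) hc₀ hc₁ m
    _ = (1 : Matrix (Fin M) (Fin M) ℂ) m k := by
      rw [add_sub_right_comm, sub_right_comm, hcm, one_apply]
      simp only [sub_eq_zero, Nat.cast_inj, Fin.val_inj]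
      split_ifs <;> field_simp <;> ring

theorem stmt3_general (M : ℕ)
    (Cr D : Matrix (Fin M) (Fin M) ℂ)
    (hCr : ∀ m n, Cr m n =
      ((1 - |((m : ℕ) : ℝ) - ((n : ℕ) : ℝ)| / M : ℝ) : ℂ) +
        Complex.I * (((((m : ℕ) : ℝ) - ((n : ℕ) : ℝ)) / M : ℝ) : ℂ))
    (hD : ∀ m n, D m n =
      (if m = n then (M : ℂ) else 0)
      + (if |((m : ℕ) : ℤ) - ((n : ℕ) : ℤ)| = 1 then -(M : ℂ) / 2 else 0)
      + (if |((m : ℕ) : ℤ) - ((n : ℕ) : ℤ)| = (M : ℤ) - 1 ∧ m ≠ n then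
          Complex.I * (M : ℂ) * ((((n : ℕ) : ℝ) - ((m : ℕ) : ℝ) : ℝ) : ℂ) / (2 * ((M : ℂ) - 1))
        else 0)) :
    D * Cr = 1 ∧ Cr * D = 1 ∧ IsUnit Cr ∧ Cr⁻¹ = D := by
  have hCr' : Cr = cov M := by
    ext m n
    rw [hCr, cov, of_apply, covKernel]
    push_cast
    rfl
  have hD' : D = covInv M := by
    ext m n
    rw [hD, covInv_apply]
  have hDC : D * Cr = 1 := by
    rw [hD', hCr']
    exact covInv_mul_cov M
  exact ⟨hDC, mul_eq_one_comm.mp hDC, IsUnit.of_mul_eq_one_right D hDC, inv_eq_left_inv hDC⟩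

/-- **Lemma 1.** Closed-form inverse of the arcsine-law covariance matrix
`[C_r]_{m,n} = 1 − |m−n|/M + i(m−n)/M` of the one-bit quantized noiseless received signal for
the optimal pilot sequence. Indices are `0`-based (`Fin M`), which leaves all differences
`m − n` unchanged. -/
theorem stmt3 (M : ℕ) (hM : 1 ≤ M)
    (Cr D : Matrix (Fin M) (Fin M) ℂ)
    (hCr : ∀ m n, Cr m n =
      ((1 - |((m : ℕ) : ℝ) - ((n : ℕ) : ℝ)| / M : ℝ) : ℂ) +
        Complex.I * (((((m : ℕ) : ℝ) - ((n : ℕ) : ℝ)) / M : ℝ) : ℂ))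
    (hD : ∀ m n, D m n =
      (if m = n then (M : ℂ) else 0)
      + (if |((m : ℕ) : ℤ) - ((n : ℕ) : ℤ)| = 1 then -(M : ℂ) / 2 else 0)
      + (if |((m : ℕ) : ℤ) - ((n : ℕ) : ℤ)| = (M : ℤ) - 1 ∧ m ≠ n then
          Complex.I * (M : ℂ) * ((((n : ℕ) : ℝ) - ((m : ℕ) : ℝ) : ℝ) : ℂ) / (2 * ((M : ℂ) - 1))
        else 0)) :
    D * Cr = 1 ∧ Cr * D = 1 ∧ IsUnit Cr ∧ Cr⁻¹ = D :=
  stmt3_general M Cr D hCr hD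
end

section
/- Let σ > 0 and η > 0, let X and W be independent real random variables with X ~ N(0, σ²/2) and W ~ N(0, η²/2), and set c = σ² / (√π √(σ² + η²)). Then E[(X − c · sign(X + W))²] = σ²/2 − σ⁴ / (π (σ² + η²)). -/
open MeasureTheory ProbabilityTheory Real

/-!
Write `v₁ = σ² / 2`, `v₂ = η² / 2` and `φ_v` for the centred Gaussian density of variance `v`.
Since `X + W` is Gaussian it has no atoms, so `sign (X + W) ^ 2 = 1` almost surely and the mean
square error is `E[X²] - 2 c E[X sign (X + W)] + c²`. Conditioning on `W = w`, Gaussian integration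
by parts (`φ_v' = -(x / v) φ_v`) gives `E[X sign (X + w)] = 2 v₁ φ_{v₁}(w)`, and integrating this
against the law of `W` gives `E[X sign (X + W)] = 2 v₁ φ_{v₁ + v₂}(0)`, which is exactly `c`.
Hence the error is `E[X²] - c² = σ² / 2 - c²`.
-/

open Set Filter Topology
open scoped NNReal

lemma Real.measurable_sign : Measurable Real.sign :=
  measurable_const.ite measurableSet_Iio (measurable_const.ite measurableSet_Ioi measurable_const)

lemma Real.abs_sign_le_one (x : ℝ) : |Real.sign x| ≤ 1 := by
  rcases Real.sign_apply_eq x with h | h | h <;> simp [h]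

lemma Real.sign_sq_of_ne_zero {x : ℝ} (hx : x ≠ 0) : Real.sign x ^ 2 = 1 := by
  rcases Real.sign_apply_eq_of_ne_zero x hx with h | h <;> simp [h]

namespace ProbabilityTheory

lemma gaussianPDFReal_self (m : ℝ) (v : ℝ≥0) : gaussianPDFReal m v m = (√(2 * π * v))⁻¹ := by
  simp [gaussianPDFReal]

lemma hasDerivAt_gaussianPDFReal (m : ℝ) (v : ℝ≥0) (x : ℝ) :
    HasDerivAt (gaussianPDFReal m v) (-((x - m) / v) * gaussianPDFReal m v x) x := by
  have h : HasDerivAt (fun y ↦ -(y - m) ^ 2 / (2 * v)) (-(2 * (x - m)) / (2 * v)) x := by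
    simpa using (((hasDerivAt_id x).sub_const m).pow 2).neg.div_const (2 * (v : ℝ))
  simp only [gaussianPDFReal_def]
  exact (h.exp.const_mul _).congr_deriv (by ring)

variable {m : ℝ} {v : ℝ≥0}

lemma setIntegral_gaussianReal_eq_setIntegral_mul (hv : v ≠ 0) {s : Set ℝ} (hs : MeasurableSet s)
    (f : ℝ → ℝ) :
    ∫ x in s, f x ∂gaussianReal m v = ∫ x in s, gaussianPDFReal m v x * f x := by
  rw [gaussianReal_of_var_ne_zero _ hv, restrict_withDensity hs,
    integral_withDensity_eq_integral_toReal_smul (measurable_gaussianPDF m v)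
      (ae_of_all _ fun _ ↦ gaussianPDF_lt_top)]
  simp [toReal_gaussianPDF]

lemma integrable_gaussianPDFReal_mul_iff (hv : v ≠ 0) {f : ℝ → ℝ} :
    Integrable (fun x ↦ gaussianPDFReal m v x * f x) ↔ Integrable f (gaussianReal m v) := by
  rw [gaussianReal_of_var_ne_zero _ hv, integrable_withDensity_iff_integrable_smul'
    (measurable_gaussianPDF m v) (ae_of_all _ fun _ ↦ gaussianPDF_lt_top)]
  simp [toReal_gaussianPDF]

lemma integrable_sub_mul_gaussianPDFReal (hv : v ≠ 0) :
    Integrable (fun x ↦ (x - m) * gaussianPDFReal m v x) := by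
  simp_rw [mul_comm _ (gaussianPDFReal m v _)]
  exact (integrable_gaussianPDFReal_mul_iff hv).2 <|
    ((memLp_id_gaussianReal 1).integrable le_rfl).sub (integrable_const m)

lemma setIntegral_Ioi_sub_gaussianReal (hv : v ≠ 0) (t : ℝ) :
    ∫ x in Ioi t, (x - m) ∂gaussianReal m v = v * gaussianPDFReal m v t := by
  have hv' : (v : ℝ) ≠ 0 := by exact_mod_cast hv
  have hderiv : ∀ x, HasDerivAt (fun x ↦ -v * gaussianPDFReal m v x)
      ((x - m) * gaussianPDFReal m v x) x := fun x ↦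
    ((hasDerivAt_gaussianPDFReal m v x).const_mul (-(v : ℝ))).congr_deriv (by field_simp)
  have htendsto : Tendsto (fun x ↦ -v * gaussianPDFReal m v x) atTop (𝓝 0) :=
    tendsto_zero_of_hasDerivAt_of_integrableOn_Ioi (a := t) (fun x _ ↦ hderiv x)
      (integrable_sub_mul_gaussianPDFReal hv).integrableOn
      ((integrable_gaussianPDFReal m v).const_mul _).integrableOn
  rw [setIntegral_gaussianReal_eq_setIntegral_mul hv measurableSet_Ioi]
  simp_rw [mul_comm (gaussianPDFReal m v _)]
  rw [integral_Ioi_of_hasDerivAt_of_tendsto' (fun x _ ↦ hderiv x)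
    (integrable_sub_mul_gaussianPDFReal hv).integrableOn htendsto]
  ring

lemma integral_sub_mul_sign_sub_gaussianReal (hv : v ≠ 0) (t : ℝ) :
    ∫ x, (x - m) * Real.sign (x - t) ∂gaussianReal m v = 2 * v * gaussianPDFReal m v t := by
  have := nullSingletonClass_gaussianReal (μ := m) hv
  have hid : Integrable (fun x ↦ x) (gaussianReal m v) :=
    (memLp_id_gaussianReal 1).integrable le_rfl
  have hint : Integrable (fun x ↦ x - m) (gaussianReal m v) := hid.sub (integrable_const m)
  have hsplit : (fun x ↦ (x - m) * Real.sign (x - t)) =ᵐ[gaussianReal m v]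
      fun x ↦ 2 * (Ioi t).indicator (fun x ↦ x - m) x - (x - m) := by
    filter_upwards [Measure.ae_ne _ t] with x hx
    rcases hx.lt_or_gt with h | h
    · rw [Real.sign_of_neg (sub_neg.2 h), indicator_of_notMem (notMem_Ioi.2 h.le)]
      ring
    · rw [Real.sign_of_pos (sub_pos.2 h), indicator_of_mem (mem_Ioi.2 h)]
      ring
  have hmean : ∫ x, (x - m) ∂gaussianReal m v = 0 := by
    rw [integral_sub hid (integrable_const m)]
    simp [integral_id_gaussianReal]
  rw [integral_congr_ae hsplit, integral_sub ((hint.indicator measurableSet_Ioi).const_mul 2) hint,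
    integral_const_mul, integral_indicator measurableSet_Ioi, setIntegral_Ioi_sub_gaussianReal hv,
    hmean]
  ring

lemma integral_gaussianPDFReal_gaussianReal {v₁ v₂ : ℝ≥0} (hv₁ : v₁ ≠ 0) (hv₂ : v₂ ≠ 0) :
    ∫ x, gaussianPDFReal 0 v₁ x ∂gaussianReal 0 v₂ = gaussianPDFReal 0 (v₁ + v₂) 0 := by
  have h₁ : (0 : ℝ) < v₁ := by positivity
  have h₂ : (0 : ℝ) < v₂ := by positivity
  have hb : 0 < (2 * (v₁ : ℝ))⁻¹ + (2 * (v₂ : ℝ))⁻¹ := by positivity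
  have hprod : ∀ x, gaussianPDFReal 0 v₂ x • gaussianPDFReal 0 v₁ x =
      (√(2 * π * v₁))⁻¹ * (√(2 * π * v₂))⁻¹ *
        rexp (-((2 * (v₁ : ℝ))⁻¹ + (2 * (v₂ : ℝ))⁻¹) * x ^ 2) := fun x ↦ by
    simp only [gaussianPDFReal, sub_zero, smul_eq_mul]
    rw [mul_mul_mul_comm, ← Real.exp_add, mul_comm (√(2 * π * v₂))⁻¹]
    ring_nf
  rw [integral_gaussianReal_eq_integral_smul hv₂]
  simp_rw [hprod]
  rw [integral_const_mul, integral_gaussian, gaussianPDFReal_self, NNReal.coe_add,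
    ← Real.sqrt_inv, ← Real.sqrt_inv, ← Real.sqrt_inv, ← Real.sqrt_mul (by positivity),
    ← Real.sqrt_mul (by positivity)]
  congr 1
  field_simp
  ring

lemma integral_sq_gaussianReal (v : ℝ≥0) : ∫ x, x ^ 2 ∂gaussianReal 0 v = v := by
  simpa [integral_id_gaussianReal] using
    (variance_eq_integral measurable_id'.aemeasurable).symm.trans
      (variance_fun_id_gaussianReal (μ := 0) (v := v))

variable {Ω : Type*} {mΩ : MeasurableSpace Ω} {P : Measure Ω}

lemma integral_mul_sign_add_of_hasLaw_prod {X W : Ω → ℝ} {v₁ v₂ : ℝ≥0} (hv₁ : v₁ ≠ 0)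
    (hv₂ : v₂ ≠ 0)
    (hXW : HasLaw (fun ω ↦ (X ω, W ω)) ((gaussianReal 0 v₁).prod (gaussianReal 0 v₂)) P) :
    ∫ ω, X ω * Real.sign (X ω + W ω) ∂P = 2 * v₁ * gaussianPDFReal 0 (v₁ + v₂) 0 := by
  set f : ℝ × ℝ → ℝ := fun p ↦ p.1 * Real.sign (p.1 + p.2)
  have hf_meas : Measurable f :=
    measurable_fst.mul (Real.measurable_sign.comp (measurable_fst.add measurable_snd))
  have hf_int : Integrable f ((gaussianReal 0 v₁).prod (gaussianReal 0 v₂)) := by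
    refine Integrable.mono' (((memLp_id_gaussianReal 1).integrable le_rfl).abs.comp_fst _)
      hf_meas.aestronglyMeasurable (ae_of_all _ fun p ↦ ?_)
    rw [Real.norm_eq_abs, abs_mul]
    exact mul_le_of_le_one_right (abs_nonneg _) (Real.abs_sign_le_one _)
  calc ∫ ω, X ω * Real.sign (X ω + W ω) ∂P
      = ∫ p, f p ∂(gaussianReal 0 v₁).prod (gaussianReal 0 v₂) :=
        hXW.integral_comp hf_meas.aestronglyMeasurable
    _ = ∫ w, ∫ x, x * Real.sign (x + w) ∂gaussianReal 0 v₁ ∂gaussianReal 0 v₂ :=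
        integral_prod_symm f hf_int
    _ = ∫ w, 2 * v₁ * gaussianPDFReal 0 v₁ w ∂gaussianReal 0 v₂ := by
        congr with w
        simpa [gaussianPDFReal] using integral_sub_mul_sign_sub_gaussianReal (m := 0) hv₁ (-w)
    _ = 2 * v₁ * gaussianPDFReal 0 (v₁ + v₂) 0 := by
        rw [integral_const_mul, integral_gaussianPDFReal_gaussianReal hv₁ hv₂]

lemma ae_sign_sq_eq_one_of_hasLaw {S : Ω → ℝ} {μ : Measure ℝ} [NullSingletonClass μ]
    (hS : HasLaw S μ P) : ∀ᵐ ω ∂P, Real.sign (S ω) ^ 2 = 1 :=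
  ae_of_ae_map hS.aemeasurable <| hS.map_eq ▸
    (Measure.ae_ne μ 0).mono fun _ ↦ Real.sign_sq_of_ne_zero

lemma integral_sub_const_mul_sq_of_sq_eq_one [IsProbabilityMeasure P] {X S : Ω → ℝ}
    (hX : MemLp X 2 P) (hS : AEStronglyMeasurable S P) (hS1 : ∀ᵐ ω ∂P, S ω ^ 2 = 1) (c : ℝ) :
    ∫ ω, (X ω - c * S ω) ^ 2 ∂P = ∫ ω, X ω ^ 2 ∂P - 2 * c * ∫ ω, X ω * S ω ∂P + c ^ 2 := by
  have hXS : Integrable (fun ω ↦ X ω * S ω) P := by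
    refine (hX.integrable one_le_two).mono (hX.1.mul hS) (hS1.mono fun ω h ↦ ?_)
    rcases sq_eq_one_iff.1 h with h | h <;> simp [h]
  have hX2 : Integrable (fun ω ↦ X ω ^ 2) P := hX.integrable_sq
  have hexpand : (fun ω ↦ (X ω - c * S ω) ^ 2) =ᵐ[P]
      fun ω ↦ X ω ^ 2 - 2 * c * (X ω * S ω) + c ^ 2 :=
    hS1.mono fun ω h ↦ by linear_combination c ^ 2 * h
  rw [integral_congr_ae hexpand, integral_add (f := fun ω ↦ X ω ^ 2 - 2 * c * (X ω * S ω))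
    (hX2.sub (hXS.const_mul (2 * c))) (integrable_const _), integral_sub hX2 (hXS.const_mul _),
    integral_const_mul]
  simp

end ProbabilityTheory

/-- Mean square error of the conditional mean estimator
`c · sign(X + W)` with `c = σ²/(√π √(σ²+η²))` for `X ~ N(0, σ²/2)` observed through the
one-bit quantization of `X + W`, `W ~ N(0, η²/2)` independent of `X`:
`E[(X − c·sign(X+W))²] = σ²/2 − σ⁴/(π(σ²+η²))`. -/
theorem stmt9 {Ω : Type*} [MeasureSpace Ω] [IsProbabilityMeasure (ℙ : Measure Ω)]
    (σ η : ℝ) (hσ : 0 < σ) (hη : 0 < η)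
    (X W : Ω → ℝ) (hX : Measurable X) (hW : Measurable W)
    (hXd : Measure.map X ℙ = gaussianReal 0 ⟨σ ^ 2 / 2, by positivity⟩)
    (hWd : Measure.map W ℙ = gaussianReal 0 ⟨η ^ 2 / 2, by positivity⟩)
    (hindep : IndepFun X W)
    (c : ℝ) (hc : c = σ ^ 2 / (Real.sqrt π * Real.sqrt (σ ^ 2 + η ^ 2))) :
    ∫ ω, (X ω - c * Real.sign (X ω + W ω)) ^ 2 =
      σ ^ 2 / 2 - σ ^ 4 / (π * (σ ^ 2 + η ^ 2)) := by
  set v₁ : ℝ≥0 := ⟨σ ^ 2 / 2, by positivity⟩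
  set v₂ : ℝ≥0 := ⟨η ^ 2 / 2, by positivity⟩
  have hv₁R : (v₁ : ℝ) = σ ^ 2 / 2 := rfl
  have hv₂R : (v₂ : ℝ) = η ^ 2 / 2 := rfl
  have hv₁ : v₁ ≠ 0 := ne_of_gt (show (0 : ℝ) < σ ^ 2 / 2 by positivity)
  have hv₂ : v₂ ≠ 0 := ne_of_gt (show (0 : ℝ) < η ^ 2 / 2 by positivity)
  have hXlaw : HasLaw X (gaussianReal 0 v₁) := ⟨hX.aemeasurable, hXd⟩
  have hWlaw : HasLaw W (gaussianReal 0 v₂) := ⟨hW.aemeasurable, hWd⟩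
  have hsum : HasLaw (fun ω ↦ X ω + W ω) (gaussianReal 0 (v₁ + v₂)) := by
    simpa [gaussianReal_conv_gaussianReal] using hindep.hasLaw_fun_add hXlaw hWlaw
  have := nullSingletonClass_gaussianReal (μ := 0) (v := v₁ + v₂) fun h ↦ hv₁ (add_eq_zero.1 h).1
  have hXL2 : MemLp X 2 :=
    (memLp_id_gaussianReal 2).comp_measurePreserving (hXlaw.measurePreserving hX)
  have hsq : ∫ ω, X ω ^ 2 = v₁ :=
    (hXlaw.integral_comp (f := fun x ↦ x ^ 2) (by fun_prop)).trans (integral_sq_gaussianReal v₁)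
  have hcoef : 2 * (v₁ : ℝ) * gaussianPDFReal 0 (v₁ + v₂) 0 = c := by
    rw [gaussianPDFReal_self, NNReal.coe_add, hv₁R, hv₂R, hc,
      show 2 * π * (σ ^ 2 / 2 + η ^ 2 / 2) = π * (σ ^ 2 + η ^ 2) by ring, Real.sqrt_mul pi_pos.le]
    field_simp
  have hc2 : c ^ 2 = σ ^ 4 / (π * (σ ^ 2 + η ^ 2)) := by
    rw [hc, div_pow, mul_pow, sq_sqrt pi_pos.le, sq_sqrt (by positivity)]
    ring
  rw [integral_sub_const_mul_sq_of_sq_eq_one hXL2 (S := fun ω ↦ Real.sign (X ω + W ω))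
    (Real.measurable_sign.comp_aemeasurable hsum.aemeasurable).aestronglyMeasurable
    (ae_sign_sq_eq_one_of_hasLaw hsum), hsq,
    integral_mul_sign_add_of_hasLaw_prod hv₁ hv₂ (hindep.hasLaw_prod hXlaw hWlaw), hcoef, hv₁R]
  linear_combination -hc2
end

section
/- Let M ≥ 1 be an integer and σ > 0. Define κ = (2Mσ/√π) sin(π/(4M)) and, for θ ∈ [0, 2π), let ĥ(θ) = κ · exp(i(π/(4M) + (π/(2M))·⌊2Mθ/π⌋)), i.e., ĥ is constant on each sector [kπ/(2M), (k+1)π/(2M)), k = 0, …, 4M−1. Then (1/(2π)) ∫_0^{2π} ∫_0^∞ |α e^{iθ} − ĥ(θ)|² · (2α/σ²) e^{−α²/σ²} dα dθ = σ² (1 − (4M²/π) sin²(π/(4M))). -/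
/-!
For fixed θ the estimate is a constant `κ e^{iφ}`, and
`|α e^{iθ} - κ e^{iφ}|² = α² - 2κα cos(θ - φ) + κ²`; the Rayleigh moments `E α² = σ²`,
`E α = σ√π/2` turn the inner integral into `σ² + κ² - √π σ κ cos(θ - φ)`. The phase `φ(θ)` is the
midpoint of the sector of width `L = π/(2M)` containing `θ`, so `cos(θ - φ)` integrates to
`2 sin(L/2)` over each of the `4M` sectors. The angular average of the error is therefore
`σ² + κ² - 2κ · (2Mσ/√π) sin(π/(4M)) = σ² - κ²`.
-/

open Real MeasureTheory

open Set

lemma inv_sq_rpow_neg_succ_div_two {σ : ℝ} (hσ : 0 < σ) (n : ℕ) :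
    ((σ ^ 2)⁻¹) ^ (-((n : ℝ) + 1) / 2) = σ ^ (n + 1) := by
  rw [inv_rpow (by positivity), ← rpow_neg (by positivity), ← rpow_natCast σ 2,
    ← rpow_mul hσ.le, ← rpow_natCast]
  push_cast
  ring_nf

lemma integrableOn_Ioi_pow_mul_exp_neg_sq_div_sq {σ : ℝ} (hσ : σ ≠ 0) (n : ℕ) :
    IntegrableOn (fun x : ℝ => x ^ n * exp (-x ^ 2 / σ ^ 2)) (Ioi 0) := by
  refine (integrableOn_rpow_mul_exp_neg_mul_sq (b := (σ ^ 2)⁻¹) (by positivity)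
    (s := n) (by linarith [n.cast_nonneg (α := ℝ)])).congr_fun (fun x _ => ?_) measurableSet_Ioi
  simp only [rpow_natCast, neg_mul, inv_mul_eq_div, neg_div]

lemma integral_Ioi_pow_mul_exp_neg_sq_div_sq {σ : ℝ} (hσ : 0 < σ) (n : ℕ) :
    ∫ x in Ioi (0 : ℝ), x ^ n * exp (-x ^ 2 / σ ^ 2) = σ ^ (n + 1) / 2 * Gamma ((n + 1) / 2) := by
  have h := integral_rpow_mul_exp_neg_mul_rpow two_pos (q := n)
    (by linarith [n.cast_nonneg (α := ℝ)]) (inv_pos.2 (pow_pos hσ 2))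
  rw [inv_sq_rpow_neg_succ_div_two hσ] at h
  rw [← mul_one_div, ← h]
  refine setIntegral_congr_fun measurableSet_Ioi (fun x _ => ?_)
  rw [rpow_natCast, rpow_two, neg_mul, inv_mul_eq_div, neg_div]

lemma integrableOn_Ioi_pow_mul_rayleigh {σ : ℝ} (hσ : σ ≠ 0) (n : ℕ) :
    IntegrableOn (fun α : ℝ => α ^ n * (2 * α / σ ^ 2) * exp (-α ^ 2 / σ ^ 2)) (Ioi 0) := by
  refine IntegrableOn.congr_fun
    ((integrableOn_Ioi_pow_mul_exp_neg_sq_div_sq hσ (n + 1)).const_mul (2 / σ ^ 2))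
    (fun α _ => ?_) measurableSet_Ioi
  ring

lemma integral_Ioi_pow_mul_rayleigh {σ : ℝ} (hσ : 0 < σ) (n : ℕ) :
    ∫ α in Ioi (0 : ℝ), α ^ n * (2 * α / σ ^ 2) * exp (-α ^ 2 / σ ^ 2) =
      σ ^ n * Gamma (n / 2 + 1) := by
  have h := integral_Ioi_pow_mul_exp_neg_sq_div_sq hσ (n + 1)
  calc ∫ α in Ioi (0 : ℝ), α ^ n * (2 * α / σ ^ 2) * exp (-α ^ 2 / σ ^ 2)
      = 2 / σ ^ 2 * ∫ α in Ioi (0 : ℝ), α ^ (n + 1) * exp (-α ^ 2 / σ ^ 2) := by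
        rw [← integral_const_mul]
        exact setIntegral_congr_fun measurableSet_Ioi (fun α _ => by ring)
    _ = σ ^ n * Gamma (n / 2 + 1) := by
        rw [h]
        push_cast
        field_simp
        ring_nf

lemma integral_Ioi_quadratic_mul_rayleigh {σ : ℝ} (hσ : 0 < σ) (a b c : ℝ) :
    ∫ α in Ioi (0 : ℝ), (a * α ^ 2 + b * α + c) * (2 * α / σ ^ 2) * exp (-α ^ 2 / σ ^ 2) =
      a * σ ^ 2 + b * (σ * √π / 2) + c := by
  have hint (n : ℕ) := integrableOn_Ioi_pow_mul_rayleigh hσ.ne' n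
  have hmom (n : ℕ) := integral_Ioi_pow_mul_rayleigh hσ n
  have h0 : ∫ α in Ioi (0 : ℝ), (2 * α / σ ^ 2) * exp (-α ^ 2 / σ ^ 2) = 1 := by
    simpa using hmom 0
  have h1 : ∫ α in Ioi (0 : ℝ), α * (2 * α / σ ^ 2) * exp (-α ^ 2 / σ ^ 2) = σ * √π / 2 := by
    have := hmom 1
    norm_num at this
    rw [this, show (3 : ℝ) / 2 = 1 / 2 + 1 by norm_num, Gamma_add_one (by norm_num),
      Gamma_one_half_eq]
    ring
  have h2 : ∫ α in Ioi (0 : ℝ), α ^ 2 * (2 * α / σ ^ 2) * exp (-α ^ 2 / σ ^ 2) = σ ^ 2 := by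
    simpa [one_add_one_eq_two, Gamma_two] using hmom 2
  calc ∫ α in Ioi (0 : ℝ), (a * α ^ 2 + b * α + c) * (2 * α / σ ^ 2) * exp (-α ^ 2 / σ ^ 2)
      = ∫ α in Ioi (0 : ℝ), (a * (α ^ 2 * (2 * α / σ ^ 2) * exp (-α ^ 2 / σ ^ 2)) +
          b * (α ^ 1 * (2 * α / σ ^ 2) * exp (-α ^ 2 / σ ^ 2)) +
          c * (α ^ 0 * (2 * α / σ ^ 2) * exp (-α ^ 2 / σ ^ 2))) :=
        setIntegral_congr_fun measurableSet_Ioi (fun α _ => by ring)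
    _ = a * σ ^ 2 + b * (σ * √π / 2) + c := by
        rw [integral_add, integral_add]
        · simp only [integral_const_mul, pow_zero, one_mul, pow_one, h0, h1, h2, mul_one]
        · exact (hint 2).const_mul a
        · exact (hint 1).const_mul b
        · exact ((hint 2).const_mul a).add ((hint 1).const_mul b)
        · exact (hint 0).const_mul c

lemma norm_ofReal_mul_exp_sub_sq (α θ κ φ : ℝ) :
    ‖(α : ℂ) * Complex.exp (θ * Complex.I) - κ * Complex.exp (Complex.I * φ)‖ ^ 2 =
      α ^ 2 - 2 * κ * cos (θ - φ) * α + κ ^ 2 := by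
  rw [mul_comm Complex.I, Complex.sq_norm, Complex.normSq_apply]
  simp only [Complex.sub_re, Complex.sub_im, Complex.re_ofReal_mul, Complex.im_ofReal_mul,
    Complex.exp_ofReal_mul_I_re, Complex.exp_ofReal_mul_I_im, cos_sub]
  linear_combination α ^ 2 * sin_sq_add_cos_sq θ + κ ^ 2 * sin_sq_add_cos_sq φ

lemma integral_Ioi_norm_sub_sq_mul_rayleigh {σ : ℝ} (hσ : 0 < σ) (θ κ φ : ℝ) :
    ∫ α in Ioi (0 : ℝ), ‖(α : ℂ) * Complex.exp (θ * Complex.I) - κ * Complex.exp (Complex.I * φ)‖ ^ 2 *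
        (2 * α / σ ^ 2) * exp (-α ^ 2 / σ ^ 2) =
      σ ^ 2 + κ ^ 2 - √π * σ * κ * cos (θ - φ) := by
  simp_rw [norm_ofReal_mul_exp_sub_sq]
  have h := integral_Ioi_quadratic_mul_rayleigh hσ 1 (-2 * κ * cos (θ - φ)) (κ ^ 2)
  simp only [one_mul] at h
  convert h using 3 <;> ring

lemma intervalIntegrable_cos_sub_sector_center (L a b : ℝ) :
    IntervalIntegrable (fun θ => cos (θ - (L / 2 + L * ⌊θ / L⌋))) volume a b := by
  refine (intervalIntegrable_const (c := (1 : ℝ))).mono_fun' ?_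
    (Filter.Eventually.of_forall fun θ => by simpa using abs_cos_le_one _)
  exact (measurable_cos.comp (measurable_id.sub (measurable_const.add (measurable_const.mul
    (measurable_from_top.comp (measurable_id.div_const L).floor))))).aestronglyMeasurable

lemma integral_cos_sub_sector_center_on_sector {L : ℝ} (hL : 0 < L) (k : ℤ) :
    ∫ θ in k * L..(k + 1) * L, cos (θ - (L / 2 + L * ⌊θ / L⌋)) = 2 * sin (L / 2) := by
  have hfloor : EqOn (fun θ => cos (θ - (L / 2 + L * ⌊θ / L⌋)))
      (fun θ => cos (θ - (L / 2 + L * k))) (Ioo (k * L) ((k + 1) * L)) := by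
    rintro θ ⟨hlo, hhi⟩
    have : ⌊θ / L⌋ = k := by
      rw [Int.floor_eq_iff]
      constructor
      · rw [le_div_iff₀ hL]; exact hlo.le
      · rw [div_lt_iff₀ hL]; exact hhi
    simp only [this]
  rw [intervalIntegral.integral_congr_Ioo_of_le (by nlinarith) hfloor,
    intervalIntegral.integral_comp_sub_right (fun x => cos x), integral_cos]
  rw [show (k + 1) * L - (L / 2 + L * k) = L / 2 by ring,
    show k * L - (L / 2 + L * k) = -(L / 2) by ring, sin_neg]
  ring

lemma integral_cos_sub_sector_center {L : ℝ} (hL : 0 < L) (n : ℕ) :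
    ∫ θ in (0 : ℝ)..n * L, cos (θ - (L / 2 + L * ⌊θ / L⌋)) = 2 * n * sin (L / 2) := by
  have h := intervalIntegral.sum_integral_adjacent_intervals (a := fun k : ℕ => (k : ℝ) * L)
    (n := n) (fun k _ => intervalIntegrable_cos_sub_sector_center L _ _)
  simp only [Nat.cast_zero, zero_mul, Nat.cast_succ] at h
  rw [← h, Finset.sum_congr rfl fun k _ => by
    simpa using integral_cos_sub_sector_center_on_sector hL k]
  simp only [Finset.sum_const, Finset.card_range, nsmul_eq_mul]
  ring

/-- The mean square error of the sector-wise constant conditional mean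
estimator `ĥ(θ) = κ·exp(i(π/(4M) + (π/(2M))⌊2Mθ/π⌋))`, `κ = (2Mσ/√π) sin(π/(4M))`, of the
channel `h = α e^{iθ}` (Rayleigh magnitude `α`, uniform phase `θ`) equals
`σ²(1 − (4M²/π) sin²(π/(4M)))` (equation (40)). -/
theorem stmt12 (M : ℕ) (hM : 1 ≤ M) (σ : ℝ) (hσ : 0 < σ)
    (κ : ℝ) (hκ : κ = 2 * M * σ / Real.sqrt π * Real.sin (π / (4 * M)))
    (hhat : ℝ → ℂ)
    (hhhat : ∀ θ : ℝ, hhat θ = (κ : ℂ) * Complex.exp (Complex.I *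
      ((π / (4 * M) + (π / (2 * M)) * ((⌊2 * M * θ / π⌋ : ℤ) : ℝ) : ℝ) : ℂ))) :
    (1 / (2 * π)) * ∫ θ in (0 : ℝ)..(2 * π), ∫ α in Set.Ioi (0 : ℝ),
        ‖(α : ℂ) * Complex.exp ((θ : ℂ) * Complex.I) - hhat θ‖ ^ 2 *
          (2 * α / σ ^ 2) * Real.exp (-α ^ 2 / σ ^ 2) =
      σ ^ 2 * (1 - (4 * (M : ℝ) ^ 2 / π) * Real.sin (π / (4 * M)) ^ 2) := by
  set L := π / (2 * M) with hL_def
  have hM0 : (0 : ℝ) < M := by exact_mod_cast hM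
  have hL : 0 < L := by positivity
  have hcenter (θ : ℝ) : π / (4 * M) + π / (2 * M) * ((⌊2 * M * θ / π⌋ : ℤ) : ℝ) =
      L / 2 + L * ⌊θ / L⌋ := by
    rw [hL_def, show θ / (π / (2 * M)) = 2 * M * θ / π by field_simp]
    ring
  have hinner (θ : ℝ) : ∫ α in Ioi (0 : ℝ), ‖(α : ℂ) * Complex.exp (θ * Complex.I) - hhat θ‖ ^ 2 *
      (2 * α / σ ^ 2) * exp (-α ^ 2 / σ ^ 2) =
      σ ^ 2 + κ ^ 2 - √π * σ * κ * cos (θ - (L / 2 + L * ⌊θ / L⌋)) := by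
    rw [hhhat, hcenter, integral_Ioi_norm_sub_sq_mul_rayleigh hσ]
  have hperiod : 2 * π = (4 * M : ℕ) * L := by
    rw [hL_def]; push_cast; field_simp; ring
  simp only [hinner]
  rw [intervalIntegral.integral_sub intervalIntegrable_const
      ((intervalIntegrable_cos_sub_sector_center L _ _).const_mul _),
    intervalIntegral.integral_const, intervalIntegral.integral_const_mul, hperiod,
    integral_cos_sub_sector_center hL, ← hperiod, smul_eq_mul, hκ, hL_def]
  have hπ : √π ^ 2 = π := sq_sqrt pi_pos.le
  field_simp
  push_cast
  ring_nf
  rw [hπ]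
  ring
end
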